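/- Exponential forgetting of the initial condition for inhomogeneous Markov chains: let μ and ν be probability vectors in ℝ^N, let Γ^(1),…,Γ^(k) be row-stochastic N×N matrices, and suppose there exist an integer l ≥ 1 and ε > 0 with N·ε ≤ 1 such that every product of l consecutive matrices Γ^(t)Γ^(t+1)⋯Γ^(t+l−1) (with 1 ≤ t and t+l−1 ≤ k) has all entries ≥ ε. Then ‖μΓ^(1)Γ^(2)⋯Γ^(k) − νΓ^(1)Γ^(2)⋯Γ^(k)‖₁ ≤ 2·(1 − N·ε)^{⌊k/l⌋}, where ‖u‖₁ = Σ_i |u_i|. -/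

import Mathlib

open Finset

/-- A probability (row) vector in `ℝ^N`. -/
def IsProbVec {N : ℕ} (v : Fin N → ℝ) : Prop :=
  (∀ i, 0 ≤ v i) ∧ ∑ i, v i = 1

/-- A row-stochastic `N × N` real matrix. -/
def IsRowStochastic {N : ℕ} (A : Matrix (Fin N) (Fin N) ℝ) : Prop :=
  (∀ i j, 0 ≤ A i j) ∧ ∀ i, ∑ j, A i j = 1

/-- The product `Γ^(t) Γ^(t+1) ⋯ Γ^(t+l-1)` of `l` consecutive transition matrices. -/
noncomputable def matProd {N : ℕ} (Γ : ℕ → Matrix (Fin N) (Fin N) ℝ) (t l : ℕ) :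
    Matrix (Fin N) (Fin N) ℝ :=
  ((List.range l).map fun s => Γ (t + s)).prod

/-! A signed measure `x` with total mass zero loses a factor `1 - Nε` of its total variation
`∑ |x i|` under a stochastic matrix whose entries are all `≥ ε`: subtracting the constant
matrix `ε` does not change `x A`, and leaves a nonnegative matrix with row sums `1 - Nε`.
Applied to `x = μ - ν`, this contracts once per block of `l` steps, while the `k mod l`
remaining steps do not increase the total variation. -/

open Matrix

section VecMul

variable {ι : Type*} [Fintype ι]

theorem sum_vecMul_of_sum_row_eq_one {A : Matrix ι ι ℝ} (hrow : ∀ i, ∑ j, A i j = 1)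
    (x : ι → ℝ) : ∑ j, (x ᵥ* A) j = ∑ i, x i := by
  simp only [vecMul, dotProduct]
  rw [Finset.sum_comm]
  simp [← Finset.mul_sum, hrow]

theorem sum_abs_vecMul_le_of_nonneg {A : Matrix ι ι ℝ} (hA : ∀ i j, 0 ≤ A i j) {c : ℝ}
    (hrow : ∀ i, ∑ j, A i j = c) (x : ι → ℝ) :
    ∑ j, |(x ᵥ* A) j| ≤ c * ∑ i, |x i| :=
  calc ∑ j, |(x ᵥ* A) j| ≤ ∑ j, ∑ i, |x i| * A i j :=
        Finset.sum_le_sum fun j _ => (Finset.abs_sum_le_sum_abs _ _).trans_eq <|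
          Finset.sum_congr rfl fun i _ => by rw [abs_mul, abs_of_nonneg (hA i j)]
    _ = c * ∑ i, |x i| := by
        rw [Finset.sum_comm, Finset.mul_sum]
        exact Finset.sum_congr rfl fun i _ => by rw [← Finset.mul_sum, hrow, mul_comm]

theorem sum_abs_vecMul_le_of_sum_eq_zero {A : Matrix ι ι ℝ} (hrow : ∀ i, ∑ j, A i j = 1)
    {ε : ℝ} (hε : ∀ i j, ε ≤ A i j) {x : ι → ℝ} (hx : ∑ i, x i = 0) :
    ∑ j, |(x ᵥ* A) j| ≤ (1 - Fintype.card ι * ε) * ∑ i, |x i| := by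
  have hshift : x ᵥ* A = x ᵥ* (A - of fun _ _ => ε) := by
    ext j
    simp [vecMul, dotProduct, mul_sub, Finset.sum_sub_distrib, ← Finset.sum_mul, hx]
  rw [hshift]
  refine sum_abs_vecMul_le_of_nonneg (fun i j => sub_nonneg.2 (hε i j)) (fun i => ?_) x
  simp [Finset.sum_sub_distrib, hrow]

end VecMul

theorem IsProbVec.sum_abs_sub_le_two {N : ℕ} {μ ν : Fin N → ℝ} (hμ : IsProbVec μ)
    (hν : IsProbVec ν) : ∑ i, |μ i - ν i| ≤ 2 :=
  calc ∑ i, |μ i - ν i| ≤ ∑ i, (μ i + ν i) := Finset.sum_le_sum fun i _ =>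
        (abs_sub _ _).trans_eq <| by rw [abs_of_nonneg (hμ.1 i), abs_of_nonneg (hν.1 i)]
    _ = 2 := by rw [Finset.sum_add_distrib, hμ.2, hν.2]; norm_num

theorem IsRowStochastic.one {N : ℕ} : IsRowStochastic (1 : Matrix (Fin N) (Fin N) ℝ) :=
  ⟨fun i j => by by_cases h : i = j <;> simp [one_apply, h], fun i => by simp [one_apply]⟩

theorem IsRowStochastic.mul {N : ℕ} {A B : Matrix (Fin N) (Fin N) ℝ}
    (hA : IsRowStochastic A) (hB : IsRowStochastic B) : IsRowStochastic (A * B) :=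
  ⟨fun i j => by
      rw [mul_apply]
      exact Finset.sum_nonneg fun m _ => mul_nonneg (hA.1 i m) (hB.1 m j),
    fun i => (sum_vecMul_of_sum_row_eq_one hB.2 (A i)).trans (hA.2 i)⟩

section MatProd

variable {N : ℕ} (Γ : ℕ → Matrix (Fin N) (Fin N) ℝ)

theorem matProd_add (t a b : ℕ) :
    matProd Γ t (a + b) = matProd Γ t a * matProd Γ (t + a) b := by
  simp only [matProd, List.range_add, List.map_append, List.prod_append, List.map_map]
  congr 3
  ext s
  simp [add_assoc]

theorem matProd_one (t : ℕ) : matProd Γ t 1 = Γ t := by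
  simp [matProd]

theorem isRowStochastic_matProd {t m : ℕ} (h : ∀ s < m, IsRowStochastic (Γ (t + s))) :
    IsRowStochastic (matProd Γ t m) := by
  induction m with
  | zero => simpa [matProd] using IsRowStochastic.one
  | succ n ih =>
    rw [matProd_add, matProd_one]
    exact (ih fun s hs => h s (by omega)).mul (h n (by omega))

theorem sum_abs_vecMul_matProd_le {t l q : ℕ} {ε : ℝ} (hNε : (N : ℝ) * ε ≤ 1)
    (hΓ : ∀ s < l * q, IsRowStochastic (Γ (t + s)))
    (hblock : ∀ p < q, ∀ i j, ε ≤ matProd Γ (t + l * p) l i j)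
    {x : Fin N → ℝ} (hx : ∑ i, x i = 0) :
    ∑ j, |(x ᵥ* matProd Γ t (l * q)) j| ≤ (1 - N * ε) ^ q * ∑ i, |x i| := by
  induction q with
  | zero => simp [matProd]
  | succ q ih =>
    have hhead : IsRowStochastic (matProd Γ t (l * q)) :=
      isRowStochastic_matProd Γ fun s hs => hΓ s (by nlinarith)
    have hlast : IsRowStochastic (matProd Γ (t + l * q) l) :=
      isRowStochastic_matProd Γ fun s hs => by
        simpa [add_assoc] using hΓ (l * q + s) (by nlinarith)
    have hz : ∑ j, (x ᵥ* matProd Γ t (l * q)) j = 0 := by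
      rw [sum_vecMul_of_sum_row_eq_one hhead.2, hx]
    rw [Nat.mul_succ, matProd_add, ← vecMul_vecMul]
    calc _ ≤ (1 - N * ε) * ∑ j, |(x ᵥ* matProd Γ t (l * q)) j| := by
          simpa using sum_abs_vecMul_le_of_sum_eq_zero hlast.2 (hblock q (by omega)) hz
      _ ≤ (1 - N * ε) * ((1 - N * ε) ^ q * ∑ i, |x i|) :=
          mul_le_mul_of_nonneg_left (ih (fun s hs => hΓ s (by nlinarith))
            fun p hp => hblock p (by omega)) (sub_nonneg.2 hNε)
      _ = (1 - N * ε) ^ (q + 1) * ∑ i, |x i| := by ring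

end MatProd

theorem markov_chain_exponential_forgetting_general
    (N l k : ℕ)
    (ε : ℝ) (hNε : (N : ℝ) * ε ≤ 1)
    (μ ν : Fin N → ℝ) (hμ : IsProbVec μ) (hν : IsProbVec ν)
    (Γ : ℕ → Matrix (Fin N) (Fin N) ℝ)
    (hΓ : ∀ t, 1 ≤ t → t ≤ k → IsRowStochastic (Γ t))
    (hprim : ∀ t, 1 ≤ t → t + l - 1 ≤ k → ∀ i j, ε ≤ matProd Γ t l i j) :
    ∑ j, |(∑ i, μ i * matProd Γ 1 k i j) - ∑ i, ν i * matProd Γ 1 k i j| ≤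
      2 * (1 - (N : ℝ) * ε) ^ (k / l) := by
  set q := k / l
  have hk : l * q + k % l = k := Nat.div_add_mod k l
  have hx : ∑ i, (μ - ν) i = 0 := by simp [Finset.sum_sub_distrib, hμ.2, hν.2]
  have htail : IsRowStochastic (matProd Γ (1 + l * q) (k % l)) :=
    isRowStochastic_matProd Γ fun s hs => hΓ _ (by omega) (by omega)
  have hsplit : matProd Γ 1 k = matProd Γ 1 (l * q) * matProd Γ (1 + l * q) (k % l) := by
    rw [← matProd_add, hk]
  calc ∑ j, |(∑ i, μ i * matProd Γ 1 k i j) - ∑ i, ν i * matProd Γ 1 k i j|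
      = ∑ j, |((μ - ν) ᵥ* matProd Γ 1 (l * q) ᵥ* matProd Γ (1 + l * q) (k % l)) j| := by
        simp only [hsplit, vecMul_vecMul]
        simp [vecMul, dotProduct, sub_mul, Finset.sum_sub_distrib]
    _ ≤ 1 * ∑ j, |((μ - ν) ᵥ* matProd Γ 1 (l * q)) j| :=
        sum_abs_vecMul_le_of_nonneg htail.1 htail.2 _
    _ ≤ (1 - N * ε) ^ q * ∑ i, |μ i - ν i| := by
        rw [one_mul]
        refine sum_abs_vecMul_matProd_le Γ hNε (fun s hs => hΓ _ (by omega) (by omega))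
          (fun p hp => hprim _ (by omega) ?_) hx
        have := Nat.mul_le_mul_left l (Nat.succ_le_of_lt hp)
        rw [Nat.mul_succ] at this
        omega
    _ ≤ 2 * (1 - N * ε) ^ q := by
        rw [mul_comm 2]
        exact mul_le_mul_of_nonneg_left (hμ.sum_abs_sub_le_two hν)
          (pow_nonneg (sub_nonneg.2 hNε) _)

/-- Exponential forgetting of the initial condition for
inhomogeneous Markov chains: if every product of `l` consecutive matrices among
`Γ^(1), …, Γ^(k)` has all entries `≥ ε > 0` with `N ε ≤ 1`, then for probability
vectors `μ`, `ν`,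
`‖μ Γ^(1) ⋯ Γ^(k) − ν Γ^(1) ⋯ Γ^(k)‖₁ ≤ 2 (1 − N ε)^⌊k/l⌋`. -/
theorem markov_chain_exponential_forgetting
    (N l k : ℕ) (hN : 1 ≤ N) (hl : 1 ≤ l)
    (ε : ℝ) (hε : 0 < ε) (hNε : (N : ℝ) * ε ≤ 1)
    (μ ν : Fin N → ℝ) (hμ : IsProbVec μ) (hν : IsProbVec ν)
    (Γ : ℕ → Matrix (Fin N) (Fin N) ℝ)
    (hΓ : ∀ t, 1 ≤ t → t ≤ k → IsRowStochastic (Γ t))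
    (hprim : ∀ t, 1 ≤ t → t + l - 1 ≤ k → ∀ i j, ε ≤ matProd Γ t l i j) :
    ∑ j, |(∑ i, μ i * matProd Γ 1 k i j) - ∑ i, ν i * matProd Γ 1 k i j| ≤
      2 * (1 - (N : ℝ) * ε) ^ (k / l) :=
  markov_chain_exponential_forgetting_general N l k ε hNε μ ν hμ hν Γ hΓ hprim
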